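/- The optimal value of problem (P1) with the groupput state throughput T_w = ν_w·c_w equals the optimal value of problem (P2); that is, the supremum of Σ_{w∈W} π_w ν_w c_w over all distributions π feasible for (P1) equals the supremum of Σ_i α_i over all (α,β) feasible for (P2). -/

import Mathlib

open Finset

inductive NodeState : Type
  | s | l | x
deriving DecidableEq

instance : Fintype NodeState :=
  ⟨{NodeState.s, NodeState.l, NodeState.x}, by intro a; cases a <;> simp⟩

abbrev NetState (N : ℕ) := Fin N → NodeState

/-- Number of nodes in transmit state. -/
def numTransmit {N : ℕ} (w : NetState N) : ℕ :=
  (univ.filter fun i => w i = NodeState.x).card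

/-- Number of nodes in listen state (`c_w`). -/
def numListen {N : ℕ} (w : NetState N) : ℕ :=
  (univ.filter fun i => w i = NodeState.l).card

/-- The (finite) set `W` of collision-free network states. -/
def CF (N : ℕ) : Finset (NetState N) :=
  univ.filter fun w => numTransmit w ≤ 1

/-- Indicator `ν_w` that exactly one node is transmitting. -/
def nu {N : ℕ} (w : NetState N) : ℝ := if numTransmit w = 1 then 1 else 0

/-- A probability distribution on `W`, feasible for problem (P1):
nonnegative, supported on `W`, sums to 1, and each node's average power
consumption is within its budget. -/
def P1Feasible (N : ℕ) (L X ρ : Fin N → ℝ) (π : NetState N → ℝ) : Prop :=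
  (∀ w, 0 ≤ π w) ∧ (∀ w ∉ CF N, π w = 0) ∧ (∑ w ∈ CF N, π w = 1) ∧
  (∀ i, (∑ w ∈ (CF N).filter (fun w => w i = NodeState.l), π w) * L i
      + (∑ w ∈ (CF N).filter (fun w => w i = NodeState.x), π w) * X i ≤ ρ i)

/-- Feasibility for problem (P2). -/
def P2Feasible (N : ℕ) (L X ρ : Fin N → ℝ) (α β : Fin N → ℝ) : Prop :=
  (∀ i, α i ∈ Set.Icc (0 : ℝ) 1) ∧ (∀ i, β i ∈ Set.Icc (0 : ℝ) 1) ∧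
  (∀ i, α i * L i + β i * X i ≤ ρ i) ∧
  (∀ i, α i + β i ≤ 1) ∧ (∑ i, β i ≤ 1) ∧
  (∀ i, α i ≤ ∑ j ∈ univ.erase i, β j)

/-!
A feasible `π` for (P1) gives a feasible point of (P2) with the same value: take `β i` the
probability that node `i` transmits and `α i` the probability that `i` listens while some node
transmits, which is what `ν_w c_w` counts. Conversely, given `(α, β)`, let all nodes sleep with
probability `1 - ∑ β`, and with probability `β j` let node `j` transmit while every other node `i`
listens independently with probability `α i / ∑_{k ≠ i} β k`. Node `i` then listens with
probability `α i`, transmits with probability `β i`, and listens only while someone transmits.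
So the two problems have the same sets of values.
-/

section Expectation

variable {α : Type*} {s : Finset α} {π : α → ℝ}

theorem sum_filter_eq_sum_mul_boole (p : α → Prop) [DecidablePred p] :
    ∑ a ∈ s with p a, π a = ∑ a ∈ s, π a * (if p a then 1 else 0) := by
  simp only [sum_filter, mul_boole]

theorem sum_mul_le_one (hπ : ∀ a ∈ s, 0 ≤ π a) (hs : ∑ a ∈ s, π a = 1) {g : α → ℝ}
    (hg : ∀ a ∈ s, g a ≤ 1) : ∑ a ∈ s, π a * g a ≤ 1 :=
  calc ∑ a ∈ s, π a * g a ≤ ∑ a ∈ s, π a * 1 := by gcongr with a ha; exacts [hπ a ha, hg a ha]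
    _ = 1 := by simpa using hs

theorem sum_mul_boole_mem_Icc (hπ : ∀ a ∈ s, 0 ≤ π a) (hs : ∑ a ∈ s, π a = 1) (p : α → Prop)
    [DecidablePred p] : ∑ a ∈ s, π a * (if p a then 1 else 0) ∈ Set.Icc (0 : ℝ) 1 :=
  ⟨sum_nonneg fun a ha => mul_nonneg (hπ a ha) (by positivity),
    sum_mul_le_one hπ hs fun a _ => by split_ifs <;> norm_num⟩

end Expectation

theorem sum_prod_apply_eq_one {ι κ : Type*} [Fintype ι] [DecidableEq ι] [Fintype κ]
    {q : ι → κ → ℝ} (hq : ∀ i, ∑ a, q i a = 1) : ∑ w : ι → κ, ∏ i, q i (w i) = 1 := by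
  rw [← Fintype.prod_sum]
  simp [hq]

theorem sum_prod_apply_mul {ι κ : Type*} [Fintype ι] [DecidableEq ι] [Fintype κ]
    {q : ι → κ → ℝ} (hq : ∀ i, ∑ a, q i a = 1) (i : ι) (c : κ → ℝ) :
    ∑ w : ι → κ, (∏ j, q j (w j)) * c (w i) = ∑ a, q i a * c a := by
  have tilt : ∀ w : ι → κ, (∏ j, q j (w j)) * c (w i) =
      ∏ j, q j (w j) * (if j = i then c (w j) else 1) := fun w => by
    rw [prod_mul_distrib, prod_ite_eq', if_pos (mem_univ i)]
  rw [sum_congr rfl fun w _ => tilt w,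
    ← Fintype.prod_sum (fun j a => q j a * if j = i then c a else 1),
    prod_eq_single i (fun j _ hj => by simp [hj, hq]) (by simp)]
  simp

theorem NodeState.sum_univ {M : Type*} [AddCommMonoid M] (f : NodeState → M) :
    ∑ a, f a = f .s + f .l + f .x := by
  rw [show (univ : Finset NodeState) = {.s, .l, .x} from rfl, sum_insert (by decide),
    sum_insert (by decide), sum_singleton, add_assoc]

def nodeLaw (pl px : ℝ) : NodeState → ℝ
  | .s => 1 - pl - px
  | .l => pl
  | .x => px

theorem sum_nodeLaw_mul (pl px : ℝ) (c : NodeState → ℝ) :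
    ∑ a, nodeLaw pl px a * c a = (1 - pl - px) * c .s + pl * c .l + px * c .x :=
  NodeState.sum_univ _

theorem sum_nodeLaw (pl px : ℝ) : ∑ a, nodeLaw pl px a = 1 := by
  rw [NodeState.sum_univ]
  simp only [nodeLaw]
  abel

theorem nodeLaw_nonneg {pl px : ℝ} (hl : 0 ≤ pl) (hx : 0 ≤ px) (h : pl + px ≤ 1)
    (a : NodeState) : 0 ≤ nodeLaw pl px a := by
  cases a <;> simp only [nodeLaw] <;> linarith

section States

variable {N : ℕ}

theorem numTransmit_eq_sum (w : NetState N) :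
    (numTransmit w : ℝ) = ∑ i, if w i = NodeState.x then 1 else 0 :=
  natCast_card_filter _ _

theorem sum_erase_transmit_eq_numTransmit {w : NetState N} {i : Fin N}
    (hi : w i ≠ NodeState.x) :
    ∑ j ∈ univ.erase i, (if w j = NodeState.x then 1 else 0 : ℝ) = numTransmit w := by
  rw [numTransmit_eq_sum, ← add_sum_erase _ _ (mem_univ i), if_neg hi, zero_add]

theorem nu_mul_numListen_eq_sum (w : NetState N) :
    nu w * numListen w =
      ∑ i, (if w i = NodeState.l ∧ numTransmit w = 1 then 1 else 0 : ℝ) := by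
  by_cases h : numTransmit w = 1 <;> simp [nu, numListen, h]

theorem numTransmit_eq_one_of_forall_iff {w : NetState N} {j : Fin N}
    (hj : ∀ i, w i = .x ↔ i = j) : numTransmit w = 1 :=
  card_eq_one.2 ⟨j, by ext; simp [hj]⟩

end States

theorem exists_P2Feasible_of_P1Feasible {N : ℕ} {L X ρ : Fin N → ℝ} (hL : ∀ i, 0 ≤ L i)
    {π : NetState N → ℝ} (hπ : P1Feasible N L X ρ π) :
    ∃ α β : Fin N → ℝ, P2Feasible N L X ρ α β ∧
      ∑ i, α i = ∑ w ∈ CF N, π w * (nu w * (numListen w : ℝ)) := by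
  obtain ⟨hpos, -, hsum, hpow⟩ := hπ
  have hposCF : ∀ w ∈ CF N, 0 ≤ π w := fun w _ => hpos w
  have hCF : ∀ w ∈ CF N, numTransmit w ≤ 1 := fun w hw => (mem_filter.1 hw).2
  simp only [sum_filter_eq_sum_mul_boole] at hpow
  refine ⟨fun i => ∑ w ∈ CF N, π w *
      (if w i = NodeState.l ∧ numTransmit w = 1 then 1 else 0),
    fun i => ∑ w ∈ CF N, π w * (if w i = NodeState.x then 1 else 0),
    ⟨fun i => sum_mul_boole_mem_Icc hposCF hsum _, fun i => sum_mul_boole_mem_Icc hposCF hsum _,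
      fun i => ?power, fun i => ?listen_add_transmit, ?sum_transmit, fun i => ?listen_le⟩, ?value⟩
  case power =>
    refine le_trans ?_ (hpow i)
    dsimp only
    gcongr with w
    · exact hL i
    · exact hpos w
    · split_ifs <;> simp_all
  case listen_add_transmit =>
    simp only [← sum_add_distrib, ← mul_add]
    refine sum_mul_le_one hposCF hsum fun w _ => ?_
    split_ifs <;> simp_all
  case sum_transmit =>
    rw [sum_comm]
    simp only [← mul_sum, ← numTransmit_eq_sum]
    exact sum_mul_le_one hposCF hsum fun w hw => by exact_mod_cast hCF w hw
  case listen_le =>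
    rw [sum_comm]
    simp only [← mul_sum]
    gcongr with w hw
    · exact hpos w
    split_ifs with h
    · rw [sum_erase_transmit_eq_numTransmit (by simp [h.1]), h.2, Nat.cast_one]
    · exact sum_nonneg fun j _ => by positivity
  case value =>
    rw [sum_comm]
    simp only [← mul_sum, ← nu_mul_numListen_eq_sum]

section GroupputDist

variable {N : ℕ} (p β : Fin N → ℝ)

def transmitterLaw (j i : Fin N) : NodeState → ℝ :=
  if i = j then nodeLaw 0 1 else nodeLaw (p i) 0

def groupputDist (w : NetState N) : ℝ :=
  (1 - ∑ j, β j) * ∏ i, nodeLaw 0 0 (w i) + ∑ j, β j * ∏ i, transmitterLaw p j i (w i)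

theorem transmitterLaw_self (i : Fin N) : transmitterLaw p i i = nodeLaw 0 1 := if_pos rfl

theorem transmitterLaw_of_ne {i j : Fin N} (h : i ≠ j) :
    transmitterLaw p j i = nodeLaw (p i) 0 := if_neg h

theorem sum_transmitterLaw (j i : Fin N) : ∑ a, transmitterLaw p j i a = 1 := by
  unfold transmitterLaw
  split_ifs <;> exact sum_nodeLaw _ _

theorem sum_groupputDist : ∑ w, groupputDist p β w = 1 := by
  simp only [groupputDist, sum_add_distrib, ← mul_sum]
  rw [sum_comm]
  simp only [← mul_sum, sum_prod_apply_eq_one (q := fun _ => nodeLaw 0 0) fun _ => sum_nodeLaw 0 0,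
    sum_prod_apply_eq_one (sum_transmitterLaw p _), mul_one, sub_add_cancel]

theorem sum_groupputDist_mul (i : Fin N) (c : NodeState → ℝ) :
    ∑ w, groupputDist p β w * c (w i) =
      (1 - ∑ j, β j) * c .s + β i * c .x +
        (∑ j ∈ univ.erase i, β j) * ((1 - p i) * c .s + p i * c .l) := by
  have other (j : Fin N) (hj : j ∈ univ.erase i) :
      ∑ a, transmitterLaw p j i a * c a = (1 - p i) * c .s + p i * c .l := by
    rw [transmitterLaw_of_ne p (ne_of_mem_erase hj).symm, sum_nodeLaw_mul]
    ring
  simp only [groupputDist, add_mul, sum_add_distrib, mul_assoc, sum_mul, ← mul_sum]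
  rw [sum_comm]
  simp only [← mul_sum, sum_prod_apply_mul (q := fun _ => nodeLaw 0 0) fun _ => sum_nodeLaw 0 0,
    sum_prod_apply_mul (sum_transmitterLaw p _)]
  rw [← add_sum_erase _ (fun j => β j * ∑ a, transmitterLaw p j i a * c a) (mem_univ i),
    sum_congr rfl fun j hj => congrArg (β j * ·) (other j hj), ← sum_mul, transmitterLaw_self,
    sum_nodeLaw_mul, sum_nodeLaw_mul]
  ring

theorem sleep_or_unique_transmit_of_groupputDist_ne_zero {w : NetState N}
    (h : groupputDist p β w ≠ 0) :
    (∀ i, w i = .s) ∨ ∃ j, ∀ i, w i = .x ↔ i = j := by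
  by_cases hsleep : (1 - ∑ j, β j) * ∏ i, nodeLaw 0 0 (w i) = 0
  · rw [groupputDist, hsleep, zero_add] at h
    obtain ⟨j, -, hj⟩ := exists_ne_zero_of_sum_ne_zero h
    have hlaw := prod_ne_zero_iff.1 (right_ne_zero_of_mul hj)
    refine Or.inr ⟨j, fun i => ?_⟩
    have hi := hlaw i (mem_univ i)
    by_cases hij : i = j
    · subst hij
      rw [transmitterLaw_self] at hi
      cases hw : w i <;> simp_all [nodeLaw]
    · rw [transmitterLaw_of_ne p hij] at hi
      cases hw : w i <;> simp_all [nodeLaw]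
  · have hlaw := prod_ne_zero_iff.1 (right_ne_zero_of_mul hsleep)
    refine Or.inl fun i => ?_
    have hi := hlaw i (mem_univ i)
    cases hw : w i <;> simp_all [nodeLaw]

theorem groupputDist_eq_zero_of_notMem_CF {w : NetState N} (hw : w ∉ CF N) :
    groupputDist p β w = 0 := by
  by_contra h
  refine hw (mem_filter.2 ⟨mem_univ w, ?_⟩)
  rcases sleep_or_unique_transmit_of_groupputDist_ne_zero p β h with hsleep | ⟨j, hj⟩
  · simp [numTransmit, hsleep]
  · exact (numTransmit_eq_one_of_forall_iff hj).le

theorem groupputDist_mul_nu_mul (w : NetState N) :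
    groupputDist p β w * (nu w * numListen w) = groupputDist p β w * numListen w := by
  by_cases h : groupputDist p β w = 0
  · simp [h]
  rcases sleep_or_unique_transmit_of_groupputDist_ne_zero p β h with hsleep | ⟨j, hj⟩
  · simp [numListen, hsleep]
  · simp [nu, numTransmit_eq_one_of_forall_iff hj]

end GroupputDist

theorem exists_P1Feasible_of_P2Feasible {N : ℕ} {L X ρ α β : Fin N → ℝ}
    (h : P2Feasible N L X ρ α β) :
    ∃ π : NetState N → ℝ, P1Feasible N L X ρ π ∧
      ∑ w ∈ CF N, π w * (nu w * (numListen w : ℝ)) = ∑ i, α i := by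
  obtain ⟨hα, hβ, hpow, -, hβsum, hαD⟩ := h
  set D : Fin N → ℝ := fun i => ∑ j ∈ univ.erase i, β j
  have hD : ∀ i, 0 ≤ D i := fun i => sum_nonneg fun j _ => (hβ j).1
  -- At `D i = 0` the junk value `α i / 0 = 0` is harmless, since then `α i = 0`.
  have hpD : ∀ i, α i / D i * D i = α i := fun i => by
    rcases (hD i).eq_or_lt with h0 | hpos
    · rw [← h0, mul_zero, le_antisymm (h0 ▸ hαD i) (hα i).1]
    · exact div_mul_cancel₀ _ hpos.ne'
  set π := groupputDist (fun i => α i / D i) β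
  have hsupp (w : NetState N) (hw : w ∉ CF N) : π w = 0 :=
    groupputDist_eq_zero_of_notMem_CF _ _ hw
  have hCF (g : NetState N → ℝ) : ∑ w ∈ CF N, π w * g w = ∑ w, π w * g w :=
    sum_subset (subset_univ _) fun w _ hw => by rw [hsupp w hw, zero_mul]
  have hlisten (i : Fin N) : ∑ w, π w * (if w i = .l then 1 else 0) = α i := by
    rw [sum_groupputDist_mul _ _ i (fun a => if a = .l then 1 else 0)]
    simp only [reduceCtorEq, if_true, if_false, mul_zero, mul_one, add_zero, zero_add]
    rw [mul_comm, hpD]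
  have htransmit (i : Fin N) : ∑ w, π w * (if w i = .x then 1 else 0) = β i := by
    rw [sum_groupputDist_mul _ _ i (fun a => if a = .x then 1 else 0)]
    simp only [reduceCtorEq, if_true, if_false, mul_zero, mul_one, add_zero, zero_add]
  refine ⟨π, ⟨fun w => ?nonneg, hsupp, ?sum, fun i => ?power⟩, ?value⟩
  case nonneg =>
    have hp (i : Fin N) : 0 ≤ α i / D i ∧ α i / D i ≤ 1 :=
      ⟨div_nonneg (hα i).1 (hD i), div_le_one_of_le₀ (hαD i) (hD i)⟩
    refine add_nonneg (mul_nonneg (by linarith) (prod_nonneg fun i _ => ?_))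
      (sum_nonneg fun j _ => mul_nonneg (hβ j).1 (prod_nonneg fun i _ => ?_))
    · exact nodeLaw_nonneg le_rfl le_rfl (by norm_num) _
    · unfold transmitterLaw
      split_ifs
      · exact nodeLaw_nonneg le_rfl zero_le_one (by norm_num) _
      · exact nodeLaw_nonneg (hp i).1 le_rfl (by linarith [(hp i).2]) _
  case sum =>
    rw [sum_subset (subset_univ _) fun w _ hw => hsupp w hw]
    exact sum_groupputDist _ β
  case power => simpa only [sum_filter_eq_sum_mul_boole, hCF, hlisten, htransmit] using hpow i
  case value =>
    calc ∑ w ∈ CF N, π w * (nu w * numListen w) = ∑ w, π w * numListen w := by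
          rw [hCF]
          exact sum_congr rfl fun w _ => groupputDist_mul_nu_mul _ _ w
      _ = ∑ i, ∑ w, π w * (if w i = .l then 1 else 0) := by
          simp only [numListen, natCast_card_filter, mul_sum]
          exact sum_comm
      _ = ∑ i, α i := sum_congr rfl fun i _ => hlisten i

theorem oracle_groupput_eq_P2_general (N : ℕ) (L X ρ : Fin N → ℝ)
    (hL : ∀ i, 0 < L i) :
    sSup {v : ℝ | ∃ π : NetState N → ℝ, P1Feasible N L X ρ π ∧
        v = ∑ w ∈ CF N, π w * (nu w * (numListen w : ℝ))}
      = sSup {v : ℝ | ∃ α β : Fin N → ℝ, P2Feasible N L X ρ α β ∧ v = ∑ i, α i} := by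
  congr 1
  ext v
  constructor
  · rintro ⟨π, hπ, rfl⟩
    obtain ⟨α, β, hfeas, hval⟩ := exists_P2Feasible_of_P1Feasible (fun i => (hL i).le) hπ
    exact ⟨α, β, hfeas, hval.symm⟩
  · rintro ⟨α, β, hfeas, rfl⟩
    obtain ⟨π, hπ, hval⟩ := exists_P1Feasible_of_P2Feasible hfeas
    exact ⟨π, hπ, hval.symm⟩

/-- The optimal value of (P1) with the groupput state throughput
`T_w = ν_w · c_w` equals the optimal value of (P2). -/
theorem oracle_groupput_eq_P2 (N : ℕ) (hN : 2 ≤ N) (L X ρ : Fin N → ℝ)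
    (hL : ∀ i, 0 < L i) (hX : ∀ i, 0 < X i) (hρ : ∀ i, 0 < ρ i) :
    sSup {v : ℝ | ∃ π : NetState N → ℝ, P1Feasible N L X ρ π ∧
        v = ∑ w ∈ CF N, π w * (nu w * (numListen w : ℝ))}
      = sSup {v : ℝ | ∃ α β : Fin N → ℝ, P2Feasible N L X ρ α β ∧ v = ∑ i, α i} :=
  oracle_groupput_eq_P2_general N L X ρ hL
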